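/- Let c > 0, n ≥ 2, and let h : (0,∞) → ℝ be lower semi-continuous and non-decreasing with liminf_{θ→0⁺}(h(θ) − A₁ log θ) > −∞ for some 0 < A₁ < 2n, and liminf_{θ→∞}(h(θ) − A₂ √c θ) > −∞ for some A₂ > 2(n−1). Then there exist ε > 0 and a constant C ∈ ℝ such that h(θ) − 2n·log θ − 2(n−1)·log(sinh(√c θ)/(√c θ)) − εθ ≥ C for all θ ∈ (0,∞). -/
import Mathlib

lemma log_sinh_div_le (x : ℝ) (hx : 0 < x) : Real.log (Real.sinh x / x) ≤ x := by
  have hsp : 0 < Real.sinh x := Real.sinh_pos_iff.mpr hx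
  have hdiv : 0 < Real.sinh x / x := div_pos hsp hx
  rw [Real.log_le_iff_le_exp hdiv, div_le_iff₀ hx]
  have h1 : (-(2*x)) + (1:ℝ) ≤ Real.exp (-(2*x)) := Real.add_one_le_exp _
  have h2 : Real.exp (-x) * Real.exp (-x) = Real.exp (-(2*x)) := by
    rw [← Real.exp_add]; ring_nf
  have h3 : Real.exp x * Real.exp (-x) = 1 := by
    rw [← Real.exp_add]; simp
  have h4 : 0 < Real.exp x := Real.exp_pos x
  rw [Real.sinh_eq]
  nlinarith [Real.exp_pos (-x)]

lemma log_sinh_div_nonneg (x : ℝ) (hx : 0 < x) : 0 ≤ Real.log (Real.sinh x / x) := by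
  apply Real.log_nonneg
  rw [le_div_iff₀ hx, one_mul]
  exact (Real.self_lt_sinh_iff.mpr hx).le

lemma log_le_linear (q θ : ℝ) (hq : 0 < q) (hθ : 0 < θ) :
    Real.log θ ≤ q * θ - Real.log q - 1 := by
  have := Real.log_le_sub_one_of_pos (mul_pos hq hθ)
  rw [Real.log_mul hq.ne' hθ.ne'] at this
  linarith

theorem lemma_6_2h (c : ℝ) (hc : 0 < c) (n : ℕ) (hn : 2 ≤ n) (h : ℝ → ℝ)
    (hlsc : LowerSemicontinuousOn h (Set.Ioi 0))
    (hmono : MonotoneOn h (Set.Ioi 0))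
    (A₁ A₂ : ℝ) (hA₁ : 0 < A₁) (hA₁' : A₁ < 2 * n) (hA₂ : 2 * (n - 1 : ℝ) < A₂)
    (hlim0 : ∃ B₁ : ℝ, ∀ᶠ θ in nhdsWithin (0:ℝ) (Set.Ioi 0),
      B₁ ≤ h θ - A₁ * Real.log θ)
    (hliminf : ∃ B₂ : ℝ, ∀ᶠ θ in Filter.atTop,
      B₂ ≤ h θ - A₂ * Real.sqrt c * θ) :
    ∃ ε > 0, ∃ C : ℝ, ∀ θ ∈ Set.Ioi (0:ℝ),
      C ≤ h θ - 2 * n * Real.log θ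
          - 2 * (n - 1 : ℝ) *
              Real.log (Real.sinh (Real.sqrt c * θ) / (Real.sqrt c * θ))
          - ε * θ := by
  obtain ⟨B₁, hB₁⟩ := hlim0
  obtain ⟨B₂, hB₂⟩ := hliminf
  set s := Real.sqrt c with hs_def
  have hs : 0 < s := Real.sqrt_pos.mpr hc
  have hn' : (2:ℝ) ≤ (n:ℝ) := by exact_mod_cast hn
  have hn0 : (n:ℝ) ≠ 0 := by positivity
  set K : ℝ := 2 * ((n:ℝ) - 1) with hK_def
  set M : ℝ := 2 * (n:ℝ) with hM_def
  have hK : 0 ≤ K := by rw [hK_def]; linarith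
  have hM : 0 ≤ M := by rw [hM_def]; linarith
  set d : ℝ := (A₂ - K) * s with hd_def
  have hd : 0 < d := mul_pos (by linarith) hs
  rw [eventually_nhdsWithin_iff, Metric.eventually_nhds_iff] at hB₁
  obtain ⟨δ, hδ, hB₁'⟩ := hB₁
  rw [Filter.eventually_atTop] at hB₂
  obtain ⟨T₀, hB₂'⟩ := hB₂
  set T : ℝ := max T₀ (max δ 1) with hT_def
  have hTδ : δ ≤ T := le_trans (le_max_left δ 1) (le_max_right _ _)
  have hT1 : (1:ℝ) ≤ T := le_trans (le_max_right δ 1) (le_max_right _ _)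
  have hTT₀ : T₀ ≤ T := le_max_left _ _
  have hT : 0 < T := lt_of_lt_of_le one_pos hT1
  set ε : ℝ := d / 2 with hε_def
  have hε : 0 < ε := by positivity
  refine ⟨ε, hε, ?_⟩
  set q : ℝ := d / (8 * n) with hq_def
  have hq : 0 < q := by positivity
  have hδ2 : (0:ℝ) < δ / 2 := by linarith
  have hδ2' : (δ/2 : ℝ) ∈ Set.Ioi (0:ℝ) := hδ2
  refine ⟨min (B₁ + (A₁ - M) * Real.log (δ/2) - K * (s * δ) - ε * δ)
    (min (h (δ/2) - M * Real.log T - K * (s * T) - ε * T)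
      (B₂ + M * (Real.log q + 1))), fun θ hθ => ?_⟩
  have hθ0 : (0:ℝ) < θ := hθ
  set L : ℝ := Real.log (Real.sinh (s * θ) / (s * θ)) with hL_def
  have hsθ : 0 < s * θ := mul_pos hs hθ0
  have hLK : K * L ≤ K * (s * θ) :=
    mul_le_mul_of_nonneg_left (log_sinh_div_le _ hsθ) hK
  have hLnn : 0 ≤ K * L := mul_nonneg hK (log_sinh_div_nonneg _ hsθ)
  rcases lt_or_ge θ (δ/2) with hcase | hcase
  · -- near 0
    have hb : B₁ ≤ h θ - A₁ * Real.log θ := by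
      apply hB₁' (by simp [abs_of_pos hθ0]; linarith) hθ
    have hlog : Real.log θ ≤ Real.log (δ/2) := Real.log_le_log hθ0 hcase.le
    have hmul : (A₁ - M) * Real.log (δ/2) ≤ (A₁ - M) * Real.log θ :=
      mul_le_mul_of_nonpos_left hlog (by linarith)
    have h1 : K * (s * θ) ≤ K * (s * δ) := by
      apply mul_le_mul_of_nonneg_left _ hK
      apply mul_le_mul_of_nonneg_left (by linarith) hs.le
    have h2 : ε * θ ≤ ε * δ := mul_le_mul_of_nonneg_left (by linarith) hε.le
    refine le_trans (min_le_left _ _) ?_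
    have hexp : (A₁ - M) * Real.log (δ/2) = A₁ * Real.log (δ/2) - M * Real.log (δ/2) := by ring
    have hexp2 : (A₁ - M) * Real.log θ = A₁ * Real.log θ - M * Real.log θ := by ring
    linarith [hLK, h1]
  · rcases le_or_gt θ T with hcase2 | hcase2
    · -- middle
      have hb : h (δ/2) ≤ h θ := hmono hδ2' hθ (by linarith)
      have hlog : M * Real.log θ ≤ M * Real.log T :=
        mul_le_mul_of_nonneg_left (Real.log_le_log hθ0 hcase2) hM
      have h1 : K * (s * θ) ≤ K * (s * T) := by
        apply mul_le_mul_of_nonneg_left _ hK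
        apply mul_le_mul_of_nonneg_left hcase2 hs.le
      have h2 : ε * θ ≤ ε * T := mul_le_mul_of_nonneg_left hcase2 hε.le
      refine le_trans (le_trans (min_le_right _ _) (min_le_left _ _)) ?_
      linarith [hLK]
    · -- large
      have hb : B₂ ≤ h θ - A₂ * s * θ := hB₂' θ (by linarith)
      have hbeq : A₂ * s * θ = A₂ * (s * θ) := by ring
      have hdθ : d * θ = A₂ * (s * θ) - K * (s * θ) := by rw [hd_def]; ring
      have hεθ : 2 * (ε * θ) = d * θ := by rw [hε_def]; ring
      have hdθnn : 0 ≤ d * θ := (mul_pos hd hθ0).le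
      have hlog : M * Real.log θ ≤ M * (q * θ - Real.log q - 1) :=
        mul_le_mul_of_nonneg_left (log_le_linear q θ hq hθ0) hM
      have hMqθ : M * (q * θ - Real.log q - 1) = (d * θ) / 4 - M * Real.log q - M := by
        rw [hM_def, hq_def]; field_simp; ring
      refine le_trans (le_trans (min_le_right _ _) (min_le_right _ _)) ?_
      have hgoal : M * (Real.log q + 1) = M * Real.log q + M := by ring
      linarith [hLK]
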